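/- arXiv:2506.03848 — 3 statements merged into one kernel-verified Lean document; each statement's English description precedes it below -/
import Mathlib

section
/- Let G be a group, H a proper subgroup of G, and g₁, g₂ ∈ G. Then the set product (g₁Hg₁⁻¹)·(g₂Hg₂⁻¹) is not equal to G. In other words, the conjugates of a proper subgroup form an independent set in the comaximal subgroup graph of G. -/
/-!
If `g₁Hg₁⁻¹ · g₂Hg₂⁻¹ = G`, then writing `g₁g₂⁻¹` as such a product shows `g₁⁻¹g₂ ∈ H`, so the two
conjugates coincide; their product is then the proper subgroup `g₁Hg₁⁻¹` itself.
-/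

open Pointwise

namespace Subgroup

variable {G : Type*} [Group G] {H : Subgroup G}

theorem inv_mul_mem_of_coe_map_conj_mul_eq_univ {g₁ g₂ : G}
    (h : (H.map (MulAut.conj g₁).toMonoidHom : Set G) *
      (H.map (MulAut.conj g₂).toMonoidHom : Set G) = Set.univ) :
    g₁⁻¹ * g₂ ∈ H := by
  obtain ⟨_, ⟨a, ha, rfl⟩, _, ⟨b, hb, rfl⟩, hab⟩ :
      g₁ * g₂⁻¹ ∈ (H.map (MulAut.conj g₁).toMonoidHom : Set G) *
        (H.map (MulAut.conj g₂).toMonoidHom : Set G) :=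
    h ▸ Set.mem_univ _
  simp only [MulEquiv.coe_toMonoidHom, MulAut.conj_apply] at hab
  have : g₁⁻¹ * g₂ = a⁻¹ * b⁻¹ := by
    rw [eq_inv_mul_iff_mul_eq, eq_inv_iff_mul_eq_one]
    calc a * (g₁⁻¹ * g₂) * b = g₁⁻¹ * (g₁ * a * g₁⁻¹ * (g₂ * b * g₂⁻¹)) * g₂ := by group
      _ = 1 := by rw [hab]; group
  rw [this]
  exact H.mul_mem (H.inv_mem ha) (H.inv_mem hb)

theorem map_conj_eq_of_inv_mul_mem {g₁ g₂ : G} (hg : g₁⁻¹ * g₂ ∈ H) :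
    H.map (MulAut.conj g₂).toMonoidHom = H.map (MulAut.conj g₁).toMonoidHom :=
  calc H.map (MulAut.conj g₂).toMonoidHom = MulAut.conj g₁ • MulAut.conj (g₁⁻¹ * g₂) • H := by
        rw [smul_smul, ← map_mul, mul_inv_cancel_left]; rfl
    _ = _ := by rw [conj_smul_eq_self_of_mem hg]; rfl

theorem map_conj_eq_top_iff {g : G} : H.map (MulAut.conj g).toMonoidHom = ⊤ ↔ H = ⊤ :=
  (map_injective (MulAut.conj g).injective).eq_iff'
    (map_top_of_surjective _ (MulAut.conj g).surjective)

end Subgroup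

theorem stmt_2 {G : Type*} [Group G] (H : Subgroup G) (hH : H ≠ ⊤) (g₁ g₂ : G) :
    ((Subgroup.map (MulAut.conj g₁).toMonoidHom H : Set G) *
      (Subgroup.map (MulAut.conj g₂).toMonoidHom H : Set G)) ≠ Set.univ := by
  intro h
  rw [Subgroup.map_conj_eq_of_inv_mul_mem (Subgroup.inv_mul_mem_of_coe_map_conj_mul_eq_univ h),
    coe_mul_coe, Subgroup.coe_eq_univ, Subgroup.map_conj_eq_top_iff] at h
  exact hH h
end

section
/- Let G be a finite solvable group and M, N maximal subgroups of G. Then either the set product MN equals G, or M and N are conjugate in G. -/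
/-!
If the normal core of `M` is not contained in `N`, then `core(M) N = G`, hence `MN = G`, and
symmetrically with `M` and `N` exchanged. Otherwise `M` and `N` have the same core, and after
factoring it out both are core-free. Then a minimal normal subgroup `K` is an abelian `p`-group,
complemented by `M` and by `N`, and equal to its own centralizer. A chief factor `L/K` above it is
a `q`-group with `q ≠ p` (for `q = p` the centre of the `p`-group `L` would centralize `K`), so
`M ⊓ L` and `N ⊓ L` are the traces on `L` of Sylow `q`-subgroups of `G`, hence conjugate, and `M`
and `N` are their normalizers.
-/

open Pointwise

namespace Subgroup

variable {G : Type*} [Group G]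

theorem normal_of_le_normalizer_of_le_centralizer {S A B : Subgroup G}
    (hA : A ≤ normalizer (S : Set G)) (hB : B ≤ centralizer (S : Set G)) (hAB : A ⊔ B = ⊤) :
    S.Normal := by
  rw [← normalizer_eq_top_iff, eq_top_iff, ← hAB]
  exact sup_le hA (hB.trans (centralizer_le_normalizer _))

theorem le_normalizer_inf_of_normal (A N : Subgroup G) [N.Normal] :
    A ≤ normalizer ((A ⊓ N : Subgroup G) : Set G) :=
  (le_inf le_normalizer le_normalizer_of_normal).trans inf_normalizer_le_normalizer_inf

theorem eq_bot_of_le_of_normalCore_eq_bot {M S : Subgroup G} (hM : M.normalCore = ⊥) [S.Normal]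
    (hS : S ≤ M) : S = ⊥ :=
  le_bot_iff.mp (hM ▸ normal_le_normalCore.mpr hS)

theorem sup_inf_eq_of_le {K A L : Subgroup G} [K.Normal] (hKL : K ≤ L) (hAK : A ⊔ K = ⊤) :
    K ⊔ (A ⊓ L) = L := by
  apply SetLike.coe_injective
  rw [normal_mul, mul_inf_assoc _ _ _ hKL, ← normal_mul, sup_comm, hAK, coe_top, Set.univ_inter]

theorem le_of_le_sup_of_disjoint {K Q S : Subgroup G} [K.Normal] (hQS : Q ≤ S) (hS : S ≤ K ⊔ Q)
    (hKS : Disjoint K S) : S ≤ Q := by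
  intro s hs
  obtain ⟨k, hk, m, hm, rfl⟩ := mem_sup_of_normal_left.mp (hS hs)
  have : k = 1 := disjoint_def.mp hKS hk (by simpa using mul_mem hs (inv_mem (hQS hm)))
  simpa [this] using hm

theorem le_centralizer_of_inf_eq_bot {A B : Subgroup G} [A.Normal] [B.Normal] (h : A ⊓ B = ⊥) :
    A ≤ centralizer (B : Set G) :=
  commutator_eq_bot_iff_le_centralizer.mp (le_bot_iff.mp (h ▸ commutator_le_inf A B))

theorem inf_eq_of_isPGroup_of_sup_eq {p q : ℕ} [Fact p.Prime] [Fact q.Prime] (hpq : p ≠ q)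
    {K Q L T : Subgroup G} [K.Normal] (hK : IsPGroup p K) (hKQ : K ⊔ Q = L) (hT : IsPGroup q T)
    (hQT : Q ≤ T) : T ⊓ L = Q :=
  have hQ : Q ≤ T ⊓ L := le_inf hQT (hKQ ▸ le_sup_right)
  le_antisymm (le_of_le_sup_of_disjoint hQ (inf_le_right.trans hKQ.ge)
    (IsPGroup.disjoint_of_ne p q hpq _ _ hK hT.to_inf_left)) hQ

theorem isPGroup_inf_of_forall_pow_mem {q : ℕ} {A K L : Subgroup G}
    (hL : ∀ x ∈ L, ∃ n, x ^ q ^ n ∈ K) (hAK : A ⊓ K = ⊥) : IsPGroup q (A ⊓ L : Subgroup G) := by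
  rintro ⟨x, hxA, hxL⟩
  obtain ⟨n, hn⟩ := hL x hxL
  refine ⟨n, Subtype.ext ?_⟩
  simpa [hAK] using (mem_inf.mpr ⟨pow_mem hxA _, hn⟩ : x ^ q ^ n ∈ A ⊓ K)

def IsMinimalNormal (K : Subgroup G) : Prop :=
  Minimal (fun H : Subgroup G ↦ H.Normal ∧ H ≠ ⊥) K

theorem exists_isMinimalNormal [Finite G] [Nontrivial G] :
    ∃ K : Subgroup G, K.IsMinimalNormal :=
  exists_minimal_of_wellFoundedLT _ ⟨⊤, inferInstance, top_ne_bot⟩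

namespace IsMinimalNormal

variable {K : Subgroup G}

theorem normal (hK : K.IsMinimalNormal) : K.Normal := hK.1.1

theorem ne_bot (hK : K.IsMinimalNormal) : K ≠ ⊥ := hK.1.2

theorem le_of_normal (hK : K.IsMinimalNormal) {H : Subgroup G} [H.Normal] (hH : H ≠ ⊥)
    (hHK : H ≤ K) : K ≤ H :=
  hK.2 ⟨‹_›, hH⟩ hHK

theorem isMulCommutative [Group.IsSolvable G] (hK : K.IsMinimalNormal) : IsMulCommutative K := by
  have := hK.normal
  rw [← commutator_self_eq_bot_iff]
  by_contra h
  exact (Group.IsSolvable.commutator_lt_of_ne_bot hK.ne_bot).not_ge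
    (hK.le_of_normal h (commutator_le_left K K))

theorem exists_isPGroup [Finite G] (hK : K.IsMinimalNormal) [IsMulCommutative K] :
    ∃ p, p.Prime ∧ IsPGroup p K := by
  have := hK.normal
  have hp : (Nat.card K).minFac.Prime :=
    Nat.minFac_prime ((one_lt_card_iff_ne_bot K).mpr hK.ne_bot).ne'
  have := Fact.mk hp
  let P : Sylow (Nat.card K).minFac K := default
  have := P.characteristic_of_normal (normal_of_isMulCommutative _)
  have hPK : (P : Subgroup K).map K.subtype = K :=
    le_antisymm (map_subtype_le _) <| hK.le_of_normal
      ((map_eq_bot_iff_of_injective _ K.subtype_injective).not.mpr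
        (P.ne_bot_of_dvd_card (Nat.minFac_dvd _)))
      (map_subtype_le _)
  exact ⟨_, hp, (P.isPGroup'.map K.subtype).of_equiv (MulEquiv.subgroupCongr hPK)⟩

theorem le_of_centralizer_eq (hK : K.IsMinimalNormal) (hCK : centralizer (K : Set G) = K)
    {R : Subgroup G} [R.Normal] (hR : R ≠ ⊥) : K ≤ R := by
  have := hK.normal
  by_cases h : R ⊓ K = ⊥
  · exact absurd (le_bot_iff.mp (h ▸ le_inf le_rfl (hCK ▸ le_centralizer_of_inf_eq_bot h))) hR
  · exact (hK.le_of_normal h inf_le_right).trans inf_le_left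

theorem le_of_isPGroup [Finite G] (hK : K.IsMinimalNormal) (hCK : centralizer (K : Set G) = K)
    {p : ℕ} [Fact p.Prime] {L : Subgroup G} [L.Normal] (hL : IsPGroup p L) (hKL : K ≤ L) :
    L ≤ K := by
  have : Nontrivial L := (nontrivial_iff_ne_bot L).mpr fun h ↦ hK.ne_bot (le_bot_iff.mp (h ▸ hKL))
  have hZ : (center L).map L.subtype ≠ ⊥ :=
    (map_eq_bot_iff_of_injective _ L.subtype_injective).not.mpr hL.bot_lt_center.ne'
  rw [← hCK, le_centralizer_iff]
  intro k hk
  rw [mem_centralizer_iff]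
  intro l hl
  obtain ⟨z, hz, rfl⟩ := hK.le_of_centralizer_eq hCK hZ hk
  exact congrArg Subtype.val (mem_center_iff.mp hz ⟨l, hl⟩)

end IsMinimalNormal

theorem exists_normal_gt_forall_pow_mem [Finite G] [Group.IsSolvable G] (K : Subgroup G)
    [K.Normal] (hK : K ≠ ⊤) :
    ∃ L : Subgroup G, L.Normal ∧ K < L ∧ ∃ q, q.Prime ∧ ∀ x ∈ L, ∃ n, x ^ q ^ n ∈ K := by
  have : Nontrivial (G ⧸ K) := QuotientGroup.nontrivial_iff.mpr hK
  obtain ⟨Lbar, hLbar⟩ := exists_isMinimalNormal (G := G ⧸ K)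
  have := hLbar.isMulCommutative
  have := hLbar.normal
  obtain ⟨q, hq, hLq⟩ := hLbar.exists_isPGroup
  refine ⟨Lbar.comap (QuotientGroup.mk' K), inferInstance, ?_, q, hq, fun x hx ↦ ?_⟩
  · have hker : (⊥ : Subgroup (G ⧸ K)).comap (QuotientGroup.mk' K) = K := by
      rw [MonoidHom.comap_bot, QuotientGroup.ker_mk']
    exact hker.symm.trans_lt <|
      (comap_lt_comap_of_surjective (QuotientGroup.mk'_surjective K)).mpr
        (bot_lt_iff_ne_bot.mpr hLbar.ne_bot)
  · obtain ⟨n, hn⟩ := hLq ⟨_, hx⟩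
    exact ⟨n, (QuotientGroup.eq_one_iff _).mp (by simpa using congrArg Subtype.val hn)⟩

theorem _root_.Sylow.exists_inf_eq_map_conj [Finite G] {p : ℕ} [Fact p.Prime] (L : Subgroup G)
    [L.Normal] (T T' : Sylow p G) :
    ∃ g : G, (T' : Subgroup G) ⊓ L = ((T : Subgroup G) ⊓ L).map (MulAut.conj g).toMonoidHom := by
  obtain ⟨g, rfl⟩ := MulAction.exists_smul_eq G T T'
  refine ⟨g, ?_⟩
  rw [map_inf _ _ _ (MulAut.conj g).injective]
  congr 1
  exact (Normal.map_conj_eq L g).symm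

section CoreFree

variable {M K : Subgroup G}

theorem sup_eq_top_of_normalCore_eq_bot (hM : IsCoatom M) (hMc : M.normalCore = ⊥) [K.Normal]
    (hK : K ≠ ⊥) : M ⊔ K = ⊤ :=
  hM.2 _ (left_lt_sup.mpr fun h ↦ hK (eq_bot_of_le_of_normalCore_eq_bot hMc h))

theorem inf_eq_bot_of_normalCore_eq_bot (hMc : M.normalCore = ⊥) [K.Normal] [IsMulCommutative K]
    (hMK : M ⊔ K = ⊤) : M ⊓ K = ⊥ :=
  have : (M ⊓ K).Normal := normal_of_le_normalizer_of_le_centralizer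
    (le_normalizer_inf_of_normal M K) ((le_centralizer K).trans (centralizer_le inf_le_right))
    hMK
  eq_bot_of_le_of_normalCore_eq_bot hMc inf_le_left

theorem centralizer_eq_of_normalCore_eq_bot (hMc : M.normalCore = ⊥) [K.Normal]
    [IsMulCommutative K] (hMK : M ⊔ K = ⊤) : centralizer (K : Set G) = K := by
  have : (M ⊓ centralizer (K : Set G)).Normal := normal_of_le_normalizer_of_le_centralizer
    (le_normalizer_inf_of_normal _ _) (le_centralizer_iff.mp inf_le_right) hMK
  rw [← sup_inf_eq_of_le (le_centralizer K) hMK,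
    eq_bot_of_le_of_normalCore_eq_bot hMc inf_le_left, sup_bot_eq]

theorem normalizer_inf_eq_of_normalCore_eq_bot {L : Subgroup G} (hM : IsCoatom M)
    (hMc : M.normalCore = ⊥) [K.Normal] [L.Normal] (hMK : M ⊔ K = ⊤) (hKL : K < L) :
    normalizer ((M ⊓ L : Subgroup G) : Set G) = M := by
  refine ((hM.le_iff.mp (le_normalizer_inf_of_normal M L)).resolve_left fun h ↦ ?_)
  have : (M ⊓ L).Normal := normalizer_eq_top_iff.mp h
  have hL := sup_inf_eq_of_le hKL.le hMK
  rw [eq_bot_of_le_of_normalCore_eq_bot hMc inf_le_left, sup_bot_eq] at hL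
  exact hKL.ne hL

end CoreFree

theorem exists_map_conj_eq_of_normalCore_eq_bot [Finite G] [Group.IsSolvable G]
    {M N : Subgroup G} (hM : IsCoatom M) (hN : IsCoatom N) (hMc : M.normalCore = ⊥)
    (hNc : N.normalCore = ⊥) : ∃ g : G, N = M.map (MulAut.conj g).toMonoidHom := by
  have : Nontrivial G := nontrivial_iff.mp ⟨⟨M, ⊤, hM.1⟩⟩
  obtain ⟨K, hK⟩ := exists_isMinimalNormal (G := G)
  have := hK.normal
  have := hK.isMulCommutative
  obtain ⟨p, hp, hKp⟩ := hK.exists_isPGroup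
  have hsupM := sup_eq_top_of_normalCore_eq_bot hM hMc hK.ne_bot
  have hsupN := sup_eq_top_of_normalCore_eq_bot hN hNc hK.ne_bot
  have hinfM := inf_eq_bot_of_normalCore_eq_bot hMc hsupM
  have hinfN := inf_eq_bot_of_normalCore_eq_bot hNc hsupN
  have hCK := centralizer_eq_of_normalCore_eq_bot hMc hsupM
  rcases eq_or_ne K ⊤ with hKtop | hKtop
  · refine ⟨1, ?_⟩
    rw [← inf_top_eq N, ← inf_top_eq M, ← hKtop, hinfM, hinfN, map_bot]
  obtain ⟨L, hL, hKL, q, hq, hLq⟩ := exists_normal_gt_forall_pow_mem K hKtop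
  have := Fact.mk hp
  have := Fact.mk hq
  have hQM := isPGroup_inf_of_forall_pow_mem hLq hinfM
  have hQN := isPGroup_inf_of_forall_pow_mem hLq hinfN
  have hpq : p ≠ q := by
    rintro rfl
    have hLp : IsPGroup p L :=
      sup_inf_eq_of_le hKL.le hsupM ▸ hKp.to_sup_of_normal_left hQM
    exact hKL.not_ge (hK.le_of_isPGroup hCK hLp hKL.le)
  obtain ⟨TM, hTM⟩ := hQM.exists_le_sylow
  obtain ⟨TN, hTN⟩ := hQN.exists_le_sylow
  obtain ⟨g, hg⟩ := Sylow.exists_inf_eq_map_conj L TM TN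
  refine ⟨g, ?_⟩
  rw [← normalizer_inf_eq_of_normalCore_eq_bot hN hNc hsupN hKL,
    ← normalizer_inf_eq_of_normalCore_eq_bot hM hMc hsupM hKL,
    ← inf_eq_of_isPGroup_of_sup_eq hpq hKp (sup_inf_eq_of_le hKL.le hsupM) TM.isPGroup' hTM,
    ← inf_eq_of_isPGroup_of_sup_eq hpq hKp (sup_inf_eq_of_le hKL.le hsupN) TN.isPGroup' hTN, hg,
    map_equiv_normalizer_eq]

section Quotient

variable {H : Type*} [Group H] {f : G →* H}

theorem isCoatom_map_of_ker_le (hf : Function.Surjective f) {M : Subgroup G} (hker : f.ker ≤ M)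
    (hM : IsCoatom M) : IsCoatom (M.map f) := by
  have hcomap : (M.map f).comap f = M := comap_map_eq_self hker
  refine ⟨fun h ↦ hM.1 (by rw [← hcomap, h, comap_top]), fun K hK ↦ ?_⟩
  have := hM.2 _ (hcomap ▸ (comap_lt_comap_of_surjective hf).mpr hK)
  exact comap_injective hf (this.trans (comap_top f).symm)

theorem normalCore_map_eq_bot (hf : Function.Surjective f) {M : Subgroup G}
    (hker : f.ker = M.normalCore) : (M.map f).normalCore = ⊥ := by
  have hle : (M.map f).normalCore.comap f ≤ M.normalCore := normal_le_normalCore.mpr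
    ((comap_mono (normalCore_le _)).trans (comap_map_eq_self (hker ▸ normalCore_le M)).le)
  rw [← map_comap_eq_self_of_surjective hf (M.map f).normalCore, eq_bot_iff,
    map_le_iff_le_comap, MonoidHom.comap_bot, hker]
  exact hle

theorem eq_map_conj_of_map_eq {M N : Subgroup G} (hM : f.ker ≤ M) (hN : f.ker ≤ N) {g : G}
    (h : N.map f = (M.map f).map (MulAut.conj (f g)).toMonoidHom) :
    N = M.map (MulAut.conj g).toMonoidHom := by
  ext x
  rw [← comap_map_eq_self hN, ← comap_map_eq_self hM]
  simp only [mem_comap, h, mem_map_equiv, MulAut.conj_symm_apply, map_mul, map_inv]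

end Quotient

theorem exists_map_conj_eq_of_normalCore_eq [Finite G] [Group.IsSolvable G] {M N : Subgroup G}
    (hM : IsCoatom M) (hN : IsCoatom N) (h : M.normalCore = N.normalCore) :
    ∃ g : G, N = M.map (MulAut.conj g).toMonoidHom := by
  let π := QuotientGroup.mk' M.normalCore
  have hπ : Function.Surjective π := QuotientGroup.mk'_surjective _
  have hker : π.ker = M.normalCore := QuotientGroup.ker_mk' _
  have hkerM : π.ker ≤ M := hker.trans_le (normalCore_le M)
  have hkerN : π.ker ≤ N := (hker.trans h).trans_le (normalCore_le N)
  obtain ⟨g', hg'⟩ := exists_map_conj_eq_of_normalCore_eq_bot (isCoatom_map_of_ker_le hπ hkerM hM)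
    (isCoatom_map_of_ker_le hπ hkerN hN) (normalCore_map_eq_bot hπ hker)
    (normalCore_map_eq_bot hπ (hker.trans h))
  obtain ⟨g, rfl⟩ := hπ g'
  exact ⟨g, eq_map_conj_of_map_eq hkerM hkerN hg'⟩

theorem coe_mul_coe_eq_univ_of_normalCore_not_le {M N : Subgroup G} (hN : IsCoatom N)
    (h : ¬ M.normalCore ≤ N) : (M : Set G) * (N : Set G) = Set.univ := by
  have hsup : M.normalCore ⊔ N = ⊤ := hN.2 _ (right_lt_sup.mpr h)
  refine Set.eq_univ_of_univ_subset ?_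
  rw [← coe_top, ← hsup, normal_mul]
  exact Set.mul_subset_mul_right (normalCore_le M)

theorem coe_mul_coe_eq_univ_of_not_le_normalCore {M N : Subgroup G} (hM : IsCoatom M)
    (h : ¬ N.normalCore ≤ M) : (M : Set G) * (N : Set G) = Set.univ := by
  have hsup : M ⊔ N.normalCore = ⊤ := hM.2 _ (left_lt_sup.mpr h)
  refine Set.eq_univ_of_univ_subset ?_
  rw [← coe_top, ← hsup, mul_normal]
  exact Set.mul_subset_mul_left (normalCore_le N)

end Subgroup

theorem stmt_16 {G : Type*} [Group G] [Finite G] [Group.IsSolvable G]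
    (M N : Subgroup G) (hM : IsCoatom M) (hN : IsCoatom N) :
    (M : Set G) * (N : Set G) = Set.univ ∨
      ∃ g : G, N = Subgroup.map (MulAut.conj g).toMonoidHom M := by
  by_cases hMN : M.normalCore ≤ N
  · by_cases hNM : N.normalCore ≤ M
    · exact Or.inr (Subgroup.exists_map_conj_eq_of_normalCore_eq hM hN
        (le_antisymm (Subgroup.normal_le_normalCore.mpr hMN)
          (Subgroup.normal_le_normalCore.mpr hNM)))
    · exact Or.inl (Subgroup.coe_mul_coe_eq_univ_of_not_le_normalCore hM hNM)
  · exact Or.inl (Subgroup.coe_mul_coe_eq_univ_of_normalCore_not_le hN hMN)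
end

section
/- Let G be a finite group, M a maximal subgroup of G that is not normal, with index [G : M] = n. Then there exist n pairwise distinct subgroups of G (namely the conjugates of M), any two of which have set product not equal to G. In particular, the independence number of the comaximal subgroup graph of G is at least [G : M]. -/
/-!
Let `G` act on its subgroups by conjugation. By orbit–stabilizer the conjugates of `M` are
as many as the index of its normalizer, which is `M` itself because `M` is maximal and not normal.
Two conjugates `aMa⁻¹`, `bMb⁻¹` whose product is `G` coincide: writing `ab⁻¹ = xy` with `x`, `y`
in them shows `a⁻¹b ∈ M`.
-/

open Pointwise MulAction ConjAct

namespace Subgroup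

variable {G : Type*} [Group G]

theorem stabilizer_conjAct (H : Subgroup G) :
    stabilizer (ConjAct G) H = (normalizer (H : Set G)).comap (ofConjAct : ConjAct G ≃* G) := by
  ext g
  rw [mem_stabilizer_iff, ← toConjAct_ofConjAct g, conjAct_pointwise_smul_iff]
  rfl

theorem ncard_orbit_conjAct (H : Subgroup G) :
    (orbit (ConjAct G) H).ncard = (normalizer (H : Set G)).index := by
  rw [← index_stabilizer, stabilizer_conjAct, index_comap_of_surjective _ ofConjAct.surjective]

theorem normalizer_eq_self_of_isCoatom {M : Subgroup G} (hM : IsCoatom M) (hM' : ¬ M.Normal) :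
    normalizer (M : Set G) = M :=
  (hM.le_iff.mp le_normalizer).resolve_left (mt normalizer_eq_top_iff.mp hM')

theorem mem_toConjAct_smul_iff {H : Subgroup G} {a x : G} :
    x ∈ toConjAct a • H ↔ a⁻¹ * x * a ∈ H := by
  rw [mem_pointwise_smul_iff_inv_smul_mem, ← toConjAct_inv, toConjAct_smul, inv_inv]

theorem toConjAct_smul_eq_of_coe_mul_eq_univ (H : Subgroup G) {a b : G}
    (h : ((toConjAct a • H : Subgroup G) : Set G) * ((toConjAct b • H : Subgroup G) : Set G) =
      Set.univ) :
    toConjAct a • H = toConjAct b • H := by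
  obtain ⟨x, hx, y, hy, hxy⟩ := Set.mem_mul.mp (h.symm ▸ Set.mem_univ (a * b⁻¹))
  rw [SetLike.mem_coe, mem_toConjAct_smul_iff] at hx hy
  have hab : a⁻¹ * b = (a⁻¹ * x * a)⁻¹ * (b⁻¹ * y * b)⁻¹ := by
    rw [eq_mul_inv_of_mul_eq hxy]; group
  have : a⁻¹ * b ∈ normalizer (H : Set G) :=
    le_normalizer (hab ▸ H.mul_mem (H.inv_mem hx) (H.inv_mem hy))
  rw [← conjAct_pointwise_smul_iff, toConjAct_mul, mul_smul, toConjAct_inv, inv_smul_eq_iff] at this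
  exact this.symm

end Subgroup

theorem stmt_17 {G : Type*} [Group G] [Finite G] (M : Subgroup G)
    (hM : IsCoatom M) (hnn : ¬ M.Normal) :
    ∃ S : Finset (Subgroup G), S.card = M.index ∧
      (∀ H ∈ S, ∃ g : G, H = Subgroup.map (MulAut.conj g).toMonoidHom M) ∧
      ∀ H ∈ S, ∀ K ∈ S, H ≠ K → (H : Set G) * (K : Set G) ≠ Set.univ := by
  have hfin := Set.toFinite (orbit (ConjAct G) M)
  refine ⟨hfin.toFinset, ?_, ?_, ?_⟩
  · rw [← Set.ncard_eq_toFinset_card, Subgroup.ncard_orbit_conjAct,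
      Subgroup.normalizer_eq_self_of_isCoatom hM hnn]
  · intro H hH
    obtain ⟨a, rfl⟩ := hfin.mem_toFinset.mp hH
    exact ⟨ofConjAct a, rfl⟩
  · intro H hH K hK hne hmul
    obtain ⟨a, rfl⟩ := hfin.mem_toFinset.mp hH
    obtain ⟨b, rfl⟩ := hfin.mem_toFinset.mp hK
    exact hne (M.toConjAct_smul_eq_of_coe_mul_eq_univ (a := ofConjAct a) (b := ofConjAct b) hmul)
end
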